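/- Let H_k denote the k-th Hermite tensor in m dimensions. For any x ∈ ℝ^m with ‖x‖₂ ≤ B, the Euclidean (Frobenius) norm satisfies ‖H_k(x)‖₂ ≤ 2^k m^{k/4} B^k k^{−k/2} exp(C(k,2)/B²), where C(k,2) = k(k−1)/2. -/

import Mathlib

/-!
Expanding each entry of `H_k(x)` over the involutions `π` of `{1, …, k}` (fixed points carry a
factor `x_{i_a}`, two-cycles a factor `-δ`), Minkowski's inequality bounds `‖H_k(x)‖₂` by
`(k!)^{-1/2} ∑_π ‖T_π‖₂`, where `T_π` is the `π`-summand. Summing `T_π²` over all indices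
collapses each two-cycle to a single free index, so `‖T_π‖₂² = ‖x‖₂^{2f} m^t` when `π` has `f`
fixed points and `t` two-cycles; since `f + 2t = k` this is at most `(m^{k/4} B^k B^{-2t})²`.
An involution is determined by its set of two-cycles, a subset of the `C(k,2)` pairs, so
`∑_π B^{-2t} ≤ (1 + B^{-2})^{C(k,2)} ≤ exp(C(k,2)/B²)`. Finally `k^k ≤ e^k k! ≤ 4^k k!` gives
`(k!)^{-1/2} ≤ 2^k k^{-k/2}`.
-/

open Finset

/-- Entry of the k-th Hermite tensor in m dimensions (partitions of [k] into
singletons and pairs, encoded as involutions of Fin k). -/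
noncomputable def hermiteEntry (m k : ℕ) (x : Fin m → ℝ) (i : Fin k → Fin m) : ℝ :=
  (Real.sqrt (Nat.factorial k))⁻¹ *
    ∑ π ∈ Finset.univ.filter (fun π : Equiv.Perm (Fin k) => π * π = 1),
      (∏ a ∈ Finset.univ.filter (fun a : Fin k => π a = a), x (i a)) *
      (∏ a ∈ Finset.univ.filter (fun a : Fin k => a < π a),
        -(if i a = i (π a) then (1 : ℝ) else 0))

/-- Squared Frobenius norm of the k-th Hermite tensor in m dimensions. -/
noncomputable def hermiteNormSq (m k : ℕ) (x : Fin m → ℝ) : ℝ :=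
  ∑ i : Fin k → Fin m, hermiteEntry m k x i ^ 2

namespace Equiv.Perm

section Involutions

variable {ι : Type*} [Fintype ι] [DecidableEq ι] {π : Perm ι}

variable (ι) in
def involutions : Finset (Perm ι) := {π | π * π = 1}

theorem mem_involutions : π ∈ involutions ι ↔ Function.Involutive π := by
  simp [involutions, Function.Involutive, Equiv.ext_iff]

end Involutions

variable {ι : Type*} [Fintype ι] [LinearOrder ι] {π : Perm ι}

def fixedFinset (π : Perm ι) : Finset ι := {a | π a = a}

/-- The smaller point of each two-cycle of `π`. -/
def pairMins (π : Perm ι) : Finset ι := {a | a < π a}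

theorem card_pairMins_eq_card_filter_apply_lt (hπ : Function.Involutive π) :
    #π.pairMins = #({a | π a < a} : Finset ι) :=
  card_nbij' π π (fun a ha => by simpa [pairMins, hπ a] using ha)
    (fun a ha => by simpa [pairMins, hπ a] using ha) (fun a _ => hπ a) (fun a _ => hπ a)

theorem card_fixedFinset_add_two_mul_card_pairMins (hπ : Function.Involutive π) :
    #π.fixedFinset + 2 * #π.pairMins = Fintype.card ι := by
  rw [two_mul]
  nth_rw 2 [card_pairMins_eq_card_filter_apply_lt hπ]
  rw [fixedFinset, pairMins, card_filter, card_filter, card_filter, Fintype.card,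
    card_eq_sum_ones, ← sum_add_distrib, ← sum_add_distrib]
  refine sum_congr rfl fun a _ => ?_
  rcases lt_trichotomy a (π a) with h | h | h
  · simp [h, h.ne', not_lt.2 h.le]
  · simp [← h]
  · simp [h, h.ne, not_lt.2 h.le]

def pairSet (π : Perm ι) : Finset (ι × ι) := π.pairMins.image fun a => (a, π a)

theorem mem_pairSet {p : ι × ι} : p ∈ π.pairSet ↔ p.1 < p.2 ∧ π p.1 = p.2 := by
  simp only [pairSet, pairMins, mem_image, mem_filter, mem_univ, true_and]
  constructor
  · rintro ⟨a, h, rfl⟩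
    exact ⟨h, rfl⟩
  · rintro ⟨h, he⟩
    exact ⟨p.1, he ▸ h, by rw [he]⟩

theorem card_pairSet (π : Perm ι) : #π.pairSet = #π.pairMins :=
  card_image_of_injective _ fun _ _ h => congrArg Prod.fst h

theorem apply_eq_iff_mem_pairSet (hπ : Function.Involutive π) {a b : ι} (hab : a ≠ b) :
    π a = b ↔ (a, b) ∈ π.pairSet ∨ (b, a) ∈ π.pairSet := by
  have hba : π b = a ↔ π a = b := ⟨fun h => h ▸ hπ b, fun h => h ▸ hπ a⟩
  rcases hab.lt_or_gt with h | h <;> simp [mem_pairSet, h, h.not_gt, hba]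

theorem pairSet_injOn : Set.InjOn pairSet (involutions ι : Set (Perm ι)) := by
  intro π hπ σ hσ h
  have key {a b : ι} (hab : a ≠ b) : π a = b ↔ σ a = b := by
    rw [apply_eq_iff_mem_pairSet (mem_involutions.1 hπ) hab,
      apply_eq_iff_mem_pairSet (mem_involutions.1 hσ) hab, h]
  ext a
  by_contra hne
  by_cases ha : π a = a
  · exact hne ((key (by rwa [ha] at hne)).2 rfl)
  · exact hne ((key (Ne.symm ha)).1 rfl).symm

theorem sum_involutions_pow_card_pairMins_le {z : ℝ} (hz : 0 ≤ z) :
    ∑ π ∈ involutions ι, z ^ #π.pairMins ≤ (z + 1) ^ (Fintype.card ι).choose 2 := by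
  have hsub :
      (involutions ι).image pairSet ⊆ ({p | p.1 < p.2} : Finset (ι × ι)).powerset := by
    simp +contextual [subset_iff, mem_pairSet]
  calc ∑ π ∈ involutions ι, z ^ #π.pairMins
        = ∑ E ∈ (involutions ι).image pairSet, z ^ #E := by
        rw [sum_image pairSet_injOn]
        simp only [card_pairSet]
    _ ≤ ∑ E ∈ ({p | p.1 < p.2} : Finset (ι × ι)).powerset, z ^ #E :=
        sum_le_sum_of_subset_of_nonneg hsub fun _ _ _ => by positivity
    _ = (z + 1) ^ (Fintype.card ι).choose 2 := by
        have h := sum_pow_mul_eq_add_pow z 1 ({p | p.1 < p.2} : Finset (ι × ι))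
        simp only [one_pow, mul_one] at h
        rw [h, ← univ_product_univ, card_product_filter_lt, card_univ]

theorem prod_subtype_notMem_pairMins {R : Type*} [CommMonoid R] (π : Perm ι) (f g : ι → R) :
    ∏ b : {a // a ∉ π.pairMins}, (if π b = b then f b else g b)
      = (∏ a ∈ π.fixedFinset, f a) * ∏ a ∈ ({a | π a < a} : Finset ι), g a := by
  rw [← prod_subtype ({a | a ∉ π.pairMins} : Finset ι) (by simp)
      fun a => if π a = a then f a else g a,
    prod_ite, filter_filter, filter_filter]
  congr 2 <;> ext a <;> simp only [pairMins, fixedFinset, mem_filter, mem_univ, true_and, not_lt]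
  · exact ⟨And.right, fun h => ⟨h.le, h⟩⟩
  · exact ⟨fun h => lt_of_le_of_ne h.1 h.2, fun h => ⟨h.le, h.ne⟩⟩

variable {M : Type*} [Fintype M] [DecidableEq M]

/-- Splitting an index `i : ι → M` into its values on `pairMins π` and off it, the constraint of
each two-cycle fixes the first part in terms of the second. -/
theorem sum_prod_fixedFinset_mul_prod_pairMins (hπ : Function.Involutive π) (y : M → ℝ) :
    ∑ i : ι → M, (∏ a ∈ π.fixedFinset, y (i a)) *
        ∏ a ∈ π.pairMins, (if i a = i (π a) then (1 : ℝ) else 0)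
      = (∑ j, y j) ^ #π.fixedFinset * (Fintype.card M : ℝ) ^ #π.pairMins := by
  set L := π.pairMins
  have hswap {a : ι} (ha : a ∈ L) : π a ∉ L := by
    simp only [L, pairMins, mem_filter, mem_univ, true_and, hπ a, not_lt] at ha ⊢
    exact ha.le
  set e := (Equiv.piEquivPiSubtypeProd (· ∈ L) fun _ => M).symm
  have hterm (u : {a // a ∈ L} → M) (v : {a // a ∉ L} → M) :
      (∏ a ∈ π.fixedFinset, y (e (u, v) a)) *
          ∏ a ∈ L, (if e (u, v) a = e (u, v) (π a) then (1 : ℝ) else 0)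
        = (∏ b : {a // a ∉ L}, if π b = b then y (v b) else 1) *
          ∏ b : {a // a ∈ L}, if u b = v ⟨π b, hswap b.2⟩ then 1 else 0 := by
    have hv (b : {a // a ∉ L}) : v b = e (u, v) b := by simp [e, b.2]
    have hu (b : {a // a ∈ L}) : u b = e (u, v) b := by simp [e, b.2]
    simp only [hu, hv]
    rw [prod_subtype_notMem_pairMins π (fun a => y (e (u, v) a)) fun _ => 1, prod_const_one,
      mul_one, prod_subtype L (fun _ => Iff.rfl)]
  have hunique (v : {a // a ∉ L} → M) :
      ∑ u : {a // a ∈ L} → M, ∏ b, (if u b = v ⟨π b, hswap b.2⟩ then (1 : ℝ) else 0)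
        = 1 := by
    simp only [Fintype.prod_ite_zero, prod_const_one, ← funext_iff, Fintype.sum_ite_eq']
  have hsum (b : {a // a ∉ L}) :
      ∑ j, (if π b = b then y j else 1)
        = if π b = b then ∑ j, y j else (Fintype.card M : ℝ) := by
    split_ifs <;> simp
  rw [← e.sum_comp, Fintype.sum_prod_type, sum_comm]
  simp only [hterm, ← mul_sum, hunique, mul_one]
  rw [← Fintype.prod_sum fun (b : {a // a ∉ L}) j => if π b = b then y j else 1]
  simp only [hsum]
  rw [prod_subtype_notMem_pairMins π (fun _ => ∑ j, y j) fun _ => (Fintype.card M : ℝ),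
    prod_const, prod_const, ← card_pairMins_eq_card_filter_apply_lt hπ]

end Equiv.Perm

open Equiv.Perm

section InvolutionTerm

variable {ι M : Type*} [Fintype ι] [LinearOrder ι] [DecidableEq M] {π : Equiv.Perm ι}

def involutionTerm (π : Equiv.Perm ι) (x : M → ℝ) (i : ι → M) : ℝ :=
  (∏ a ∈ π.fixedFinset, x (i a)) * ∏ a ∈ π.pairMins, -(if i a = i (π a) then 1 else 0)

theorem involutionTerm_sq (π : Equiv.Perm ι) (x : M → ℝ) (i : ι → M) :
    involutionTerm π x i ^ 2
      = (∏ a ∈ π.fixedFinset, x (i a) ^ 2)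
        * ∏ a ∈ π.pairMins, if i a = i (π a) then 1 else 0 := by
  rw [involutionTerm, mul_pow, ← prod_pow, ← prod_pow]
  congr 1
  refine prod_congr rfl fun a _ => ?_
  split_ifs <;> norm_num

variable [Fintype M]

theorem sum_involutionTerm_sq (hπ : Function.Involutive π) (x : M → ℝ) :
    ∑ i : ι → M, involutionTerm π x i ^ 2
      = (∑ j, x j ^ 2) ^ #π.fixedFinset * (Fintype.card M : ℝ) ^ #π.pairMins := by
  simp only [involutionTerm_sq]
  exact sum_prod_fixedFinset_mul_prod_pairMins hπ fun j => x j ^ 2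

theorem sqrt_sum_involutionTerm_sq_le (hπ : Function.Involutive π) (hM : 0 < Fintype.card M)
    {x : M → ℝ} {B : ℝ} (hB : 0 < B) (hx : ∑ j, x j ^ 2 ≤ B ^ 2) :
    √(∑ i : ι → M, involutionTerm π x i ^ 2)
      ≤ (Fintype.card M : ℝ) ^ ((Fintype.card ι : ℝ) / 4) * B ^ Fintype.card ι
        * (B ^ 2)⁻¹ ^ #π.pairMins := by
  set f := #π.fixedFinset
  set t := #π.pairMins
  have hk : f + 2 * t = Fintype.card ι := card_fixedFinset_add_two_mul_card_pairMins hπ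
  have hfixed : √((∑ j, x j ^ 2) ^ f) ≤ B ^ f := by
    rw [Real.sqrt_le_left (by positivity), ← pow_mul, mul_comm, pow_mul]
    exact pow_le_pow_left₀ (sum_nonneg fun _ _ => sq_nonneg _) hx f
  have hpairs :
      √((Fintype.card M : ℝ) ^ t) ≤ (Fintype.card M : ℝ) ^ ((Fintype.card ι : ℝ) / 4) := by
    rw [Real.sqrt_eq_rpow, ← Real.rpow_natCast, ← Real.rpow_mul (Nat.cast_nonneg _)]
    refine Real.rpow_le_rpow_of_exponent_le (by exact_mod_cast hM) ?_
    rw [← hk]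
    push_cast
    linarith [(Nat.cast_nonneg f : (0 : ℝ) ≤ f)]
  have hB' : B ^ f = B ^ Fintype.card ι * (B ^ 2)⁻¹ ^ t := by
    rw [← hk, pow_add, pow_mul, mul_assoc, ← mul_pow, mul_inv_cancel₀ (by positivity),
      one_pow, mul_one]
  rw [sum_involutionTerm_sq hπ, Real.sqrt_mul (pow_nonneg (sum_nonneg fun _ _ => sq_nonneg _) _)]
  calc √((∑ j, x j ^ 2) ^ f) * √((Fintype.card M : ℝ) ^ t)
      ≤ B ^ f * (Fintype.card M : ℝ) ^ ((Fintype.card ι : ℝ) / 4) :=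
        mul_le_mul hfixed hpairs (Real.sqrt_nonneg _) (by positivity)
    _ = _ := by rw [hB']; ring

end InvolutionTerm

theorem sqrt_sum_sq_sum_le {ι κ : Type*} [Fintype ι] (s : Finset κ) (f : κ → ι → ℝ) :
    √(∑ i, (∑ p ∈ s, f p i) ^ 2) ≤ ∑ p ∈ s, √(∑ i, f p i ^ 2) := by
  have hnorm (g : ι → ℝ) : ‖WithLp.toLp 2 g‖ = √(∑ i, g i ^ 2) := by
    simp [EuclideanSpace.norm_eq]
  have h := norm_sum_le s fun p => WithLp.toLp 2 (f p)
  rw [← WithLp.toLp_sum, Finset.sum_fn] at h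
  simpa only [hnorm] using h

theorem inv_sqrt_factorial_le (k : ℕ) :
    (√(k.factorial : ℝ))⁻¹ ≤ 2 ^ k * (k : ℝ) ^ (-(k : ℝ) / 2) := by
  rcases Nat.eq_zero_or_pos k with rfl | hk
  · norm_num
  have hk' : (0 : ℝ) < k := by exact_mod_cast hk
  have hpow : (k : ℝ) ^ k ≤ (2 ^ k) ^ 2 * k.factorial := by
    have h := Real.pow_div_factorial_le_exp _ hk'.le k
    rw [div_le_iff₀ (by positivity)] at h
    calc (k : ℝ) ^ k ≤ Real.exp 1 ^ k * k.factorial := by rwa [← Real.exp_nat_mul, mul_one]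
      _ ≤ (2 ^ k) ^ 2 * k.factorial := by
        rw [← pow_mul, mul_comm k, pow_mul]
        gcongr
        linarith [Real.exp_one_lt_d9]
  have hsqrt : (k : ℝ) ^ ((k : ℝ) / 2) ≤ 2 ^ k * √(k.factorial : ℝ) := calc
    (k : ℝ) ^ ((k : ℝ) / 2) = √((k : ℝ) ^ k) := by
      rw [Real.sqrt_eq_rpow, ← Real.rpow_natCast, ← Real.rpow_mul hk'.le, div_eq_mul_one_div]
    _ ≤ √((2 ^ k) ^ 2 * k.factorial) := Real.sqrt_le_sqrt hpow
    _ = 2 ^ k * √(k.factorial : ℝ) := by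
      rw [Real.sqrt_mul (by positivity), Real.sqrt_sq (by positivity)]
  rw [neg_div, Real.rpow_neg hk'.le]
  calc (√(k.factorial : ℝ))⁻¹ = 2 ^ k * (2 ^ k * √(k.factorial : ℝ))⁻¹ := by
        rw [mul_inv, ← mul_assoc, mul_inv_cancel₀ (by positivity), one_mul]
    _ ≤ 2 ^ k * ((k : ℝ) ^ ((k : ℝ) / 2))⁻¹ := by gcongr

theorem hermiteEntry_eq_sum_involutionTerm (m k : ℕ) (x : Fin m → ℝ) (i : Fin k → Fin m) :
    hermiteEntry m k x i
      = (√(k.factorial : ℝ))⁻¹ * ∑ π ∈ involutions (Fin k), involutionTerm π x i :=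
  rfl

theorem sqrt_hermiteNormSq_le (m k : ℕ) (x : Fin m → ℝ) :
    √(hermiteNormSq m k x)
      ≤ (√(k.factorial : ℝ))⁻¹
        * ∑ π ∈ involutions (Fin k), √(∑ i, involutionTerm π x i ^ 2) := by
  simp only [hermiteNormSq, hermiteEntry_eq_sum_involutionTerm, mul_pow, ← mul_sum]
  rw [Real.sqrt_mul (by positivity), Real.sqrt_sq (by positivity)]
  gcongr
  exact sqrt_sum_sq_sum_le _ _

/-- For ‖x‖₂ ≤ B (B > 0),
‖H_k(x)‖₂ ≤ 2^k m^{k/4} B^k k^{−k/2} exp( (k(k−1)/2) / B² ). -/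
theorem stmt9 (m k : ℕ) (B : ℝ) (hB : 0 < B) (x : Fin m → ℝ)
    (hx : Real.sqrt (∑ i, x i ^ 2) ≤ B) :
    Real.sqrt (hermiteNormSq m k x)
      ≤ 2 ^ k * (m : ℝ) ^ ((k : ℝ) / 4) * B ^ k * (k : ℝ) ^ (-(k : ℝ) / 2)
        * Real.exp (((k : ℝ) * ((k : ℝ) - 1) / 2) / B ^ 2) := by
  rcases Nat.eq_zero_or_pos m with rfl | hm
  · rcases Nat.eq_zero_or_pos k with rfl | hk
    · norm_num [hermiteNormSq, hermiteEntry, filter_singleton]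
    · have : IsEmpty (Fin k → Fin 0) := ⟨fun i => (i ⟨0, hk⟩).elim0⟩
      simp only [hermiteNormSq, univ_eq_empty, sum_empty, Real.sqrt_zero]
      positivity
  have hx' : ∑ i, x i ^ 2 ≤ B ^ 2 := (Real.sqrt_le_left hB.le).1 hx
  calc √(hermiteNormSq m k x)
      ≤ (√(k.factorial : ℝ))⁻¹ * ∑ π ∈ involutions (Fin k),
          (m : ℝ) ^ ((k : ℝ) / 4) * B ^ k * (B ^ 2)⁻¹ ^ #π.pairMins := by
        refine (sqrt_hermiteNormSq_le m k x).trans ?_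
        gcongr with π hπ
        simpa only [Fintype.card_fin] using
          sqrt_sum_involutionTerm_sq_le (mem_involutions.1 hπ) (by simpa) hB hx'
    _ ≤ 2 ^ k * (k : ℝ) ^ (-(k : ℝ) / 2)
          * ((m : ℝ) ^ ((k : ℝ) / 4) * B ^ k * ((B ^ 2)⁻¹ + 1) ^ k.choose 2) := by
        rw [← mul_sum]
        gcongr
        · exact inv_sqrt_factorial_le k
        · simpa using
            sum_involutions_pow_card_pairMins_le (ι := Fin k) (by positivity : 0 ≤ (B ^ 2)⁻¹)
    _ ≤ 2 ^ k * (k : ℝ) ^ (-(k : ℝ) / 2)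
          * ((m : ℝ) ^ ((k : ℝ) / 4) * B ^ k
            * Real.exp ((k : ℝ) * ((k : ℝ) - 1) / 2 / B ^ 2)) := by
        gcongr
        rw [← Nat.cast_choose_two, div_eq_mul_inv, Real.exp_nat_mul]
        exact pow_le_pow_left₀ (by positivity) (Real.add_one_le_exp _) _
    _ = _ := by ring
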